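/- arXiv:1901.11084 — 6 statements merged into one kernel-verified Lean document; each statement's English description precedes it below -/
import Mathlib

section
/- Let P = Σ_{j=1}^n α_j δ_{y_j} be a finite mixture of Dirac measures with all y_j contained in [z_1, z_K]. Then the Cramér projection Π_C(P) onto the support {z_1,...,z_K} (defined by linearly extending the projection of Diracs) satisfies E[Π_C(P)] = E[P]. -/
open Finset

theorem sum_ite_ite_mul {ι M : Type*} [Fintype ι] [DecidableEq ι]
    [NonUnitalNonAssocSemiring M] {a b : ι} (hab : a ≠ b) (p q : M) (f : ι → M) :
    ∑ k, (if k = a then p else if k = b then q else 0) * f k = p * f a + q * f b := by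
  rw [Fintype.sum_eq_add a b hab fun k ⟨hka, hkb⟩ => by simp [hka, hkb]]
  simp [hab.symm]

theorem lerp_weights_mul_add {𝕜 : Type*} [Field 𝕜] {a b : 𝕜} (hab : a ≠ b) (y : 𝕜) :
    (b - y) / (b - a) * a + (y - a) / (b - a) * b = y := by
  have : b - a ≠ 0 := sub_ne_zero.mpr hab.symm
  field_simp
  ring

theorem cramer_projection_mixture_expectation_general
    (K n : ℕ) (z : Fin (K + 1) → ℝ) (hz : StrictMono z)
    (α y : Fin n → ℝ) (idx : Fin n → Fin K) :
    (∑ k : Fin (K + 1),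
      (∑ j : Fin n, α j *
        (if k = (idx j).castSucc then
            (z (idx j).succ - y j) / (z (idx j).succ - z (idx j).castSucc)
          else if k = (idx j).succ then
            (y j - z (idx j).castSucc) / (z (idx j).succ - z (idx j).castSucc)
          else 0)) * z k)
      = ∑ j : Fin n, α j * y j := by
  simp only [sum_mul]
  rw [sum_comm]
  refine sum_congr rfl fun j _ => ?_
  have hlt : (idx j).castSucc < (idx j).succ := Fin.castSucc_lt_succ
  simp only [mul_assoc, ← mul_sum]
  rw [sum_ite_ite_mul hlt.ne, lerp_weights_mul_add (hz hlt).ne]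

/-- The Cramér projection of a finite mixture `Σ_j α_j δ_{y_j}` (with each `y_j` lying
in some interval `[z_{i_j}, z_{i_j + 1}]` of the support) preserves the expectation:
the expectation of the projected mixture equals `Σ_j α_j y_j`. -/
theorem cramer_projection_mixture_expectation
    (K n : ℕ) (z : Fin (K + 1) → ℝ) (hz : StrictMono z)
    (α y : Fin n → ℝ) (idx : Fin n → Fin K)
    (hy : ∀ j, z (idx j).castSucc ≤ y j ∧ y j ≤ z (idx j).succ) :
    (∑ k : Fin (K + 1),
      (∑ j : Fin n, α j *
        (if k = (idx j).castSucc then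
            (z (idx j).succ - y j) / (z (idx j).succ - z (idx j).castSucc)
          else if k = (idx j).succ then
            (y j - z (idx j).castSucc) / (z (idx j).succ - z (idx j).castSucc)
          else 0)) * z k)
      = ∑ j : Fin n, α j * y j :=
  cramer_projection_mixture_expectation_general K n z hz α y idx
end

section
/- Expectation-equivalence of projected mixture update: Under the setting of the mixture/SARSA updates, if additionally the support {z_1,...,z_K} brackets all attainable returns (so projected targets preserve expectation), Z_0 is supported on the support, and the target law(r_t + γ Z_t(x_{t+1},a_{t+1})) is replaced by its Cramér projection Π_C(law(r_t + γ Z_t(x_{t+1},a_{t+1}))), then E[Z_t(x,a)] = Q_t(x,a) for all t and (x,a). -/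
/-- Expectation of a finitely supported distribution `Σ p(y) δ_y`. -/
noncomputable def expF (f : ℝ →₀ ℝ) : ℝ := f.sum fun y p => p * y

noncomputable def massF (f : ℝ →₀ ℝ) : ℝ := f.sum fun _ p => p

lemma expF_add (f g : ℝ →₀ ℝ) : expF (f + g) = expF f + expF g := by
  unfold expF
  exact Finsupp.sum_add_index (by simp) (by intros; ring)

lemma expF_smul (c : ℝ) (f : ℝ →₀ ℝ) : expF (c • f) = c * expF f := by
  unfold expF
  rw [Finsupp.sum_smul_index (by simp), Finsupp.mul_sum]
  exact Finsupp.sum_congr (fun y _ => by ring)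

lemma massF_add (f g : ℝ →₀ ℝ) : massF (f + g) = massF f + massF g := by
  unfold massF
  exact Finsupp.sum_add_index (by simp) (by intros; ring)

lemma massF_smul (c : ℝ) (f : ℝ →₀ ℝ) : massF (c • f) = c * massF f := by
  unfold massF
  rw [Finsupp.sum_smul_index (by simp), Finsupp.mul_sum]

lemma expF_mapDomain (g : ℝ → ℝ) (f : ℝ →₀ ℝ) :
    expF (Finsupp.mapDomain g f) = f.sum fun y p => p * g y := by
  unfold expF
  exact Finsupp.sum_mapDomain_index (by simp) (by intros; ring)

lemma massF_mapDomain (g : ℝ → ℝ) (f : ℝ →₀ ℝ) :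
    massF (Finsupp.mapDomain g f) = massF f := by
  unfold massF
  exact Finsupp.sum_mapDomain_index (by simp) (by intros; ring)

lemma expF_affine (c d : ℝ) (f : ℝ →₀ ℝ) :
    expF (Finsupp.mapDomain (fun y => c + d * y) f) = c * massF f + d * expF f := by
  rw [expF_mapDomain]
  unfold massF expF
  simp only [Finsupp.sum, Finset.mul_sum, ← Finset.sum_add_distrib]
  exact Finset.sum_congr rfl (fun y _ => by ring)

/-- Expectation-equivalence of the Cramér-projected mixture update and the SARSA update:
when the support `[z₁, z_K]` brackets all attainable returns (so the projection `Π_C`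
preserves expectations of supported distributions), the projected mixture update
remains expectation-equivalent to SARSA. -/
theorem projected_mixture_sarsa_expectation_equivalence
    {X A : Type*} [DecidableEq X] [DecidableEq A]
    (Rmax γ z₁ zK : ℝ) (hγ : 0 ≤ γ ∧ γ < 1)
    (hz₁ : z₁ ≤ -Rmax / (1 - γ)) (hzK : Rmax / (1 - γ) ≤ zK)
    (xs : ℕ → X) (as : ℕ → A) (r : ℕ → ℝ) (xs' : ℕ → X) (as' : ℕ → A)
    (hr : ∀ t, |r t| ≤ Rmax)
    (α : ℕ → ℝ) (hα : ∀ t, 0 ≤ α t ∧ α t ≤ 1)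
    (Pc : (ℝ →₀ ℝ) → (ℝ →₀ ℝ))
    (hPcE : ∀ f : ℝ →₀ ℝ, (↑f.support : Set ℝ) ⊆ Set.Icc z₁ zK → expF (Pc f) = expF f)
    (hPcSupp : ∀ f : ℝ →₀ ℝ, (↑(Pc f).support : Set ℝ) ⊆ Set.Icc z₁ zK)
    (hPcMass : ∀ f : ℝ →₀ ℝ, (Pc f).sum (fun _ p => p) = f.sum (fun _ p => p))
    (Z : ℕ → X → A → (ℝ →₀ ℝ)) (Q : ℕ → X → A → ℝ)
    (hmass : ∀ x a, (Z 0 x a).sum (fun _ p => p) = 1)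
    (hZ0supp : ∀ x a, (↑(Z 0 x a).support : Set ℝ) ⊆ Set.Icc z₁ zK)
    (hZ : ∀ t x a, Z (t + 1) x a =
      if x = xs t ∧ a = as t then
        (1 - α t) • Z t x a +
          (α t) • Pc (Finsupp.mapDomain (fun y => r t + γ * y) (Z t (xs' t) (as' t)))
      else Z t x a)
    (hQ : ∀ t x a, Q (t + 1) x a =
      if x = xs t ∧ a = as t then
        Q t x a + α t * (r t + γ * Q t (xs' t) (as' t) - Q t x a)
      else Q t x a)
    (h0 : ∀ x a, expF (Z 0 x a) = Q 0 x a) :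
    ∀ t x a, expF (Z t x a) = Q t x a := by
  obtain ⟨hγ0, hγ1⟩ := hγ
  have hγlt : (0:ℝ) < 1 - γ := by linarith
  -- bracketing
  have hz₁' : z₁ * (1 - γ) ≤ -Rmax := (le_div_iff₀ hγlt).mp hz₁
  have hzK' : Rmax ≤ zK * (1 - γ) := (div_le_iff₀ hγlt).mp hzK
  -- strengthened induction
  suffices H : ∀ t x a, massF (Z t x a) = 1 ∧
      (↑(Z t x a).support : Set ℝ) ⊆ Set.Icc z₁ zK ∧ expF (Z t x a) = Q t x a by
    exact fun t x a => (H t x a).2.2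
  intro t
  induction t with
  | zero => exact fun x a => ⟨hmass x a, hZ0supp x a, h0 x a⟩
  | succ t ih =>
    intro x a
    obtain ⟨hm, hs, he⟩ := ih x a
    obtain ⟨hm', hs', he'⟩ := ih (xs' t) (as' t)
    rw [hZ t x a, hQ t x a]
    by_cases hc : x = xs t ∧ a = as t
    · simp only [if_pos hc]
      set M := Finsupp.mapDomain (fun y => r t + γ * y) (Z t (xs' t) (as' t)) with hM
      have hMsupp : (↑M.support : Set ℝ) ⊆ Set.Icc z₁ zK := by
        intro y hy
        have hy' := Finsupp.mapDomain_support (f := fun y => r t + γ * y) hy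
        simp only [Finset.coe_image, Finset.mem_image] at hy'
        obtain ⟨w, hw, rfl⟩ := hy'
        have hw' : w ∈ Set.Icc z₁ zK := hs' hw
        obtain ⟨hw1, hw2⟩ := hw'
        have hrt := abs_le.mp (hr t)
        constructor
        · nlinarith [mul_le_mul_of_nonneg_left hw1 hγ0]
        · nlinarith [mul_le_mul_of_nonneg_left hw2 hγ0]
      have hME : expF M = r t + γ * Q t (xs' t) (as' t) := by
        rw [hM, expF_affine, hm', he']; ring
      have hMm : massF M = 1 := by rw [hM, massF_mapDomain]; exact hm'
      have hPcm : massF (Pc M) = 1 := by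
        unfold massF; rw [hPcMass]; exact hMm
      refine ⟨?_, ?_, ?_⟩
      · rw [massF_add, massF_smul, massF_smul, hm, hPcm]; ring
      · intro y hy
        have := Finsupp.support_add hy
        rcases Finset.mem_union.mp this with h | h
        · exact hs (Finsupp.support_smul h)
        · exact hPcSupp M (Finsupp.support_smul h)
      · rw [expF_add, expF_smul, expF_smul, he, hPcE M hMsupp, hME]; ring
    · simp only [if_neg hc]
      exact ⟨hm, hs, he⟩
end

section
/- PMF-gradient counterexample: Let the support be z = (0, 1, 2), let P = (1/3, 1/3, 1/3) and P' = (1/2, 0, 1/2) be PMFs (with CDFs F = (1/3, 2/3, 1) and F' = (1/2, 1/2, 1)), both having expectation 1. Then the gradient of the squared Cramér distance ℓ_2²(P, P') with respect to the PMF coordinates of P is (0, -1/3, 0) (up to a common shift constant along the all-ones direction), and for every step size α > 0 the updated vector P - α ∇_P ℓ_2²(P, P') has 'expectation' Σ z_i (P - α∇)_i = 1 - α/3 ≠ 1; i.e., the PMF-gradient update does not preserve expectation. -/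
open Finset

/-! The CDF differences `F - F'` are `(-1/6, 1/6)`; their suffix sums give the gradient
`(0, 1/3, 0)`, whose "expectation" is `1/3 ≠ 0`. Expectation is linear in the vector, so the
update `P - α ∇` moves it from `1` to `1 - α/3`. -/

theorem Finset.sum_mul_sub_mul {ι : Type*} (s : Finset ι) (z p g : ι → ℝ) (α : ℝ) :
    ∑ i ∈ s, z i * (p i - α * g i) = ∑ i ∈ s, z i * p i - α * ∑ i ∈ s, z i * g i := by
  rw [Finset.mul_sum, ← Finset.sum_sub_distrib]
  exact Finset.sum_congr rfl fun i _ => by ring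

/-- PMF-gradient counterexample on support `z = (0,1,2)`: with `P = (1/3,1/3,1/3)` and
`P' = (1/2,0,1/2)` (both of expectation 1), the PMF gradient of the squared Cramér
distance is `(0, 1/3, 0)`, and for every step size `α > 0` the updated vector
`P - α ∇` has expectation `1 - α/3 ≠ 1`. -/
theorem pmf_gradient_counterexample :
    let z : Fin 3 → ℝ := ![0, 1, 2]
    let P : Fin 3 → ℝ := ![1/3, 1/3, 1/3]
    let P' : Fin 3 → ℝ := ![1/2, 0, 1/2]
    let Fc : (Fin 3 → ℝ) → Fin 2 → ℝ := fun p j =>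
      ∑ k ∈ Finset.univ.filter (fun k : Fin 3 => (k : ℕ) ≤ (j : ℕ)), p k
    let g : Fin 3 → ℝ := fun i =>
      2 * ∑ j ∈ Finset.univ.filter (fun j : Fin 2 => (i : ℕ) ≤ (j : ℕ)),
        (Fc P j - Fc P' j)
    (Fc P = ![1/3, 2/3]) ∧ (Fc P' = ![1/2, 1/2]) ∧
    (∑ i, z i * P i = 1) ∧ (∑ i, z i * P' i = 1) ∧
    (g = ![0, 1/3, 0]) ∧
    (∀ αs : ℝ, 0 < αs →
      (∑ i, z i * (P i - αs * g i)) = 1 - αs / 3 ∧ 1 - αs / 3 ≠ 1) := by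
  intro z P P' Fc g
  have hFP : Fc P = ![1/3, 2/3] := by
    funext j; fin_cases j <;> norm_num [Fc, P, Finset.sum_filter, Fin.sum_univ_three]
  have hFP' : Fc P' = ![1/2, 1/2] := by
    funext j; fin_cases j <;> simp [Fc, P', Finset.sum_filter, Fin.sum_univ_three]
  have hEP : ∑ i, z i * P i = 1 := by
    norm_num [z, P, Fin.sum_univ_three, Matrix.cons_val_two, Matrix.tail_cons]
  have hEP' : ∑ i, z i * P' i = 1 := by simp [z, P', Fin.sum_univ_three]
  have hg : g = ![0, 1/3, 0] := by
    funext i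
    fin_cases i <;> norm_num [g, hFP, hFP', Finset.sum_filter, Fin.sum_univ_two]
  have hEg : ∑ i, z i * g i = 1 / 3 := by simp [z, hg, Fin.sum_univ_three]
  refine ⟨hFP, hFP', hEP, hEP', hg, fun α hα => ⟨?_, ?_⟩⟩
  · rw [Finset.sum_mul_sub_mul, hEP, hEg]; ring
  · intro h; linarith
end

section
/- Linear function approximation equivalence: Let φ: X×A → ℝ^d be features, z ∈ ℝ^K a 1-spaced support, Z_t parametrized by CDF F_{Z_t}(x,a) = W_t φ_{x,a} and Q_t(x,a) = θ_t^T φ_{x,a}. Suppose z^T C^{-1} W_0 φ_{x,a} = θ_0^T φ_{x,a} for all (x,a), and at each step the target CDF F_t satisfies z^T C^{-1} F_t = v_t where v_t = r_t + γ θ_t^T φ_{x_{t+1},a_{t+1}} is the expected TD target. If W_{t+1} = W_t + α_t (F_t - W_t φ_{x_t,a_t}) φ_{x_t,a_t}^T and θ_{t+1} = θ_t - α_t (θ_t^T φ_{x_t,a_t} - v_t) φ_{x_t,a_t}, then z^T C^{-1} W_t φ_{x,a} = θ_t^T φ_{x,a} for all t and all (x,a). -/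
open Matrix

private lemma vecMulVec_mulVec_aux {m n : Type*} [Fintype n] (u : m → ℝ) (v w : n → ℝ) :
    Matrix.vecMulVec u v *ᵥ w = (v ⬝ᵥ w) • u := by
  funext i
  simp [Matrix.vecMulVec, Matrix.mulVec, dotProduct, Finset.mul_sum, mul_assoc,
    Finset.sum_mul]
  exact Finset.sum_congr rfl fun x _ => by ring

/-- Linear function approximation equivalence: the CDF semi-gradient update on `W` and
the semi-gradient SARSA update on `θ`, coupled on the same transitions, preserve the
identity `zᵀ C⁻¹ W_t φ_{x,a} = θ_tᵀ φ_{x,a}` for all `t` and `(x,a)`. -/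
theorem linear_fa_expectation_equivalence
    {S : Type*} (K d : ℕ) (γ : ℝ)
    (z : Fin K → ℝ) (hz : ∀ i j : Fin K, (j : ℕ) = (i : ℕ) + 1 → z j = z i + 1)
    (C : Matrix (Fin K) (Fin K) ℝ)
    (hC : ∀ i j, C i j = if j ≤ i then (1 : ℝ) else 0)
    (φ : S → (Fin d → ℝ))
    (st : ℕ → S) (st' : ℕ → S) (r : ℕ → ℝ) (α : ℕ → ℝ)
    (W : ℕ → Matrix (Fin K) (Fin d) ℝ) (θ : ℕ → Fin d → ℝ)
    (Ft : ℕ → Fin K → ℝ) (v : ℕ → ℝ)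
    (hv : ∀ t, v t = r t + γ * (θ t ⬝ᵥ φ (st' t)))
    (hFt : ∀ t, (z ᵥ* C⁻¹) ⬝ᵥ Ft t = v t)
    (hW : ∀ t, W (t + 1) = W t + α t • Matrix.vecMulVec (Ft t - W t *ᵥ φ (st t)) (φ (st t)))
    (hθ : ∀ t, θ (t + 1) = θ t - α t • ((θ t ⬝ᵥ φ (st t) - v t) • φ (st t)))
    (h0 : ∀ s : S, (z ᵥ* C⁻¹) ⬝ᵥ (W 0 *ᵥ φ s) = θ 0 ⬝ᵥ φ s) :
    ∀ t (s : S), (z ᵥ* C⁻¹) ⬝ᵥ (W t *ᵥ φ s) = θ t ⬝ᵥ φ s := by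
  intro t
  induction t with
  | zero => exact h0
  | succ t ih =>
    intro s
    have key := ih (st t)
    rw [hW t, hθ t]
    simp only [Matrix.add_mulVec, Matrix.smul_mulVec, vecMulVec_mulVec_aux,
      dotProduct_add, dotProduct_smul, smul_eq_mul, sub_dotProduct, Pi.sub_apply,
      sub_dotProduct, smul_dotProduct, Pi.smul_apply]
    rw [ih s]
    have h1 : (z ᵥ* C⁻¹) ⬝ᵥ (Ft t - W t *ᵥ φ (st t)) = v t - θ t ⬝ᵥ φ (st t) := by
      rw [dotProduct_sub, hFt t, key]
    rw [h1]
    ring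
end

section
/- The expected Bellman optimality operator and distributional operators with a greedy coupling are expectation-equivalent: if E[Z_0(x,a)] = Q_0(x,a) for all (x,a), Z_{t+1}(x,a) has the distribution of R(x,a) + γ Z_t(X', a*(X')) where a*(x') ∈ argmax_{a'} E[Z_t(x',a')], and Q_{t+1} = T* Q_t with the same tie-breaking in the argmax, then E[Z_t(x,a)] = Q_t(x,a) for all t and (x,a). -/
open MeasureTheory

/-- Expectation-equivalence of the Bellman optimality operator `T*` and its
distributional analogue with a greedy coupling: the distributional update picks, at
each next state `x'`, a fixed action `sel` maximizing the expected value of `Z_t`,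
using the same tie-breaking rule (a function of the value vector) as `T*`. -/
theorem optimality_operator_expectation_equivalence
    {X A : Type*} [Fintype X] [Fintype A] [Nonempty A]
    (γ : ℝ) (hγ : 0 ≤ γ ∧ γ < 1)
    (Er : X → A → ℝ) (P : X → A → X → ℝ)
    (sel : (A → ℝ) → A) (hsel : ∀ (v : A → ℝ) (a : A), v a ≤ v (sel v))
    (Z : ℕ → X → A → Measure ℝ) (Q : ℕ → X → A → ℝ)
    (hZ : ∀ t x a, (∫ y, y ∂(Z (t + 1) x a)) =
      Er x a + γ * ∑ x', P x a x' *
        ∫ y, y ∂(Z t x' (sel (fun a' => ∫ y, y ∂(Z t x' a')))))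
    (hQ : ∀ t x a, Q (t + 1) x a =
      Er x a + γ * ∑ x', P x a x' * (⨆ a' : A, Q t x' a'))
    (h0 : ∀ x a, (∫ y, y ∂(Z 0 x a)) = Q 0 x a) :
    ∀ t x a, (∫ y, y ∂(Z t x a)) = Q t x a := by
  intro t
  induction t with
  | zero => exact h0
  | succ t ih =>
    intro x a
    rw [hZ, hQ]
    congr 1
    congr 1
    apply Finset.sum_congr rfl
    intro x' _
    congr 1
    have hv : (fun a' => ∫ y, y ∂(Z t x' a')) = fun a' => Q t x' a' := by
      funext a'; exact ih x' a'
    rw [hv, ih]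
    apply le_antisymm
    · exact le_ciSup (Set.Finite.bddAbove (Set.finite_range _)) _
    · exact ciSup_le fun a' => hsel (fun a' => Q t x' a') a'
end

section
/- The Cramér projection of a Dirac δ_y (with z_i ≤ y ≤ z_{i+1}) minimizes the Cramér distance to δ_y among all distributions supported on {z_i, z_{i+1}}: for any λ ∈ [0,1], ℓ_2²(λδ_{z_i} + (1-λ)δ_{z_{i+1}}, δ_y) is minimized at λ = (z_{i+1} - y)/(z_{i+1} - z_i). -/
/-- The Cramér projection of a Dirac `δ_y` (with `z_i ≤ y ≤ z_{i+1}`) minimizes the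
squared Cramér distance `ℓ₂²(λ δ_{z_i} + (1-λ) δ_{z_{i+1}}, δ_y)
= (y - z_i) λ² + (z_{i+1} - y)(1-λ)²` over `λ ∈ [0,1]` at
`λ = (z_{i+1} - y)/(z_{i+1} - z_i)`. -/
theorem cramer_projection_minimizes
    (zi zj y : ℝ) (h : zi < zj) (h1 : zi ≤ y) (h2 : y ≤ zj) :
    ∀ lam : ℝ, 0 ≤ lam → lam ≤ 1 →
      (y - zi) * ((zj - y) / (zj - zi)) ^ 2 +
        (zj - y) * (1 - (zj - y) / (zj - zi)) ^ 2 ≤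
      (y - zi) * lam ^ 2 + (zj - y) * (1 - lam) ^ 2 := by
  intro lam h0 hl1
  have hd : (0:ℝ) < zj - zi := by linarith
  have hne : zj - zi ≠ 0 := ne_of_gt hd
  have key : (y - zi) * lam ^ 2 + (zj - y) * (1 - lam) ^ 2 -
      ((y - zi) * ((zj - y) / (zj - zi)) ^ 2 +
        (zj - y) * (1 - (zj - y) / (zj - zi)) ^ 2) =
      (zj - zi) * (lam - (zj - y) / (zj - zi)) ^ 2 := by
    field_simp
    ring
  nlinarith [sq_nonneg (lam - (zj - y) / (zj - zi))]
end
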